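/- arXiv:math/0607416 — 5 statements merged into one kernel-verified Lean document; each statement's English description precedes it below -/
import Mathlib

section
/- Let n ∈ ℕ and let T : ℂ_n[z] → ℂ[z] be a linear operator, extended to polynomials in two variables z,w by T(z^k w^ℓ) = T(z^k) w^ℓ. Then T maps every stable polynomial of degree at most n to a stable polynomial or to 0 if and only if either (a) T has range of dimension at most one and is of the form T(f) = α(f)P for all f ∈ ℂ_n[z], where α : ℂ_n[z] → ℂ is a linear functional and P is a stable polynomial, or (b) the bivariate polynomial T[(z+w)^n] is stable. -/
/-!
If `T` kills some `(z + w₀)ⁿ` with `Im w₀ > 0`, then `T h = ε⁻¹ T ((z + w₀)ⁿ + ε h)` for every `h`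
of degree at most `n`, and `(z + w₀)ⁿ + ε h` is stable once `ε` is small; so `T` maps all of
`ℂ_n[z]` to stable polynomials or to `0`.
In a subspace all of whose nonzero members are stable, a suitable combination of any two members
vanishes at `i` and hence is `0`; so the range is at most one-dimensional, which is case (a).
Otherwise every `T[(z + w)ⁿ]` with `Im w > 0` is stable, which is case (b).

Conversely, under (b), Grace's apolarity theorem, proved by peeling off one linear factor at a
time with Laguerre's theorem on polar derivatives, shows that `T (∏ⱼ (z + aⱼ))` does not vanish on
the upper half-plane when all `Im aⱼ > 0`. A stable `f` of degree at most `n` is the limit as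
`t → 0⁺` of `f(z + i t) (1 + t (z + i))^(n - deg f)`, a multiple of such a product, and a
Hurwitz-type argument passes "stable or zero" to the limit.
-/

open Polynomial

noncomputable section

/-- A univariate complex polynomial is stable if it does not vanish on the open upper
half-plane. -/
def UStable (f : Polynomial ℂ) : Prop := ∀ z : ℂ, 0 < z.im → f.eval z ≠ 0

/-- A real univariate polynomial is hyperbolic if it is nonzero and all its (complex)
zeros are real. -/
def Hyperbolic (p : Polynomial ℝ) : Prop :=
  p ≠ 0 ∧ ∀ z : ℂ, Polynomial.aeval z p = 0 → z.im = 0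

/-- Merge two lists alternately: `mergeAlt [a1,a2,...] [b1,b2,...] = [a1,b1,a2,b2,...]`. -/
def mergeAlt : List ℝ → List ℝ → List ℝ
  | [], l => l
  | a :: as, l => a :: mergeAlt l as
termination_by a b => a.length + b.length
decreasing_by simp [List.length]; omega

/-- `AltSeq α β` : the alternation α₁ ≤ β₁ ≤ α₂ ≤ β₂ ≤ ⋯ holds (lengths differ by at
most one, starting with α). -/
def AltSeq (α β : List ℝ) : Prop :=
  (α.length = β.length ∨ α.length = β.length + 1) ∧
    List.Chain' (· ≤ ·) (mergeAlt α β)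

/-- The zeros of two real polynomials interlace. -/
def ZerosInterlace (P Q : Polynomial ℝ) : Prop :=
  (P.degree ≤ 1 ∧ Q.degree ≤ 1) ∨
    ∃ α β : List ℝ, P.roots = ↑α ∧ Q.roots = ↑β ∧ (AltSeq α β ∨ AltSeq β α)

/-- Evaluation of a bivariate polynomial `F ∈ ℂ[z][w]` at `(z, w)`. -/
def evalBiv (F : Polynomial (Polynomial ℂ)) (z w : ℂ) : ℂ :=
  (F.map (Polynomial.evalRingHom z)).eval w

/-- A bivariate polynomial is stable if it does not vanish when both coordinates are in
the open upper half-plane. -/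
def BStable (F : Polynomial (Polynomial ℂ)) : Prop :=
  ∀ z w : ℂ, 0 < z.im → 0 < w.im → evalBiv F z w ≠ 0

/-- The canonical map `ℝ[z][w] → ℂ[z][w]`. -/
def bivToC (F : Polynomial (Polynomial ℝ)) : Polynomial (Polynomial ℂ) :=
  F.map (Polynomial.mapRingHom (algebraMap ℝ ℂ))

/-- A real bivariate polynomial is (real) stable if its complexification is stable. -/
def RStableBiv (F : Polynomial (Polynomial ℝ)) : Prop := BStable (bivToC F)

/-- The extension of a linear operator `T` on `ℂ[z]` to `ℂ[z][w]` determined by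
`T(z^k w^ℓ) = T(z^k) w^ℓ`. -/
def extT (T : Polynomial ℂ →ₗ[ℂ] Polynomial ℂ) (F : Polynomial (Polynomial ℂ)) :
    Polynomial (Polynomial ℂ) :=
  F.sum fun k c => Polynomial.C (T c) * Polynomial.X ^ k

/-- The extension of a linear operator `T` on `ℝ[z]` to `ℝ[z][w]` determined by
`T(z^k w^ℓ) = T(z^k) w^ℓ`. -/
def extTR (T : Polynomial ℝ →ₗ[ℝ] Polynomial ℝ) (F : Polynomial (Polynomial ℝ)) :
    Polynomial (Polynomial ℝ) :=
  F.sum fun k c => Polynomial.C (T c) * Polynomial.X ^ k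

namespace UStable

variable {f : ℂ[X]}

lemma ne_zero (hf : UStable f) : f ≠ 0 := by
  rintro rfl
  exact hf Complex.I (by simp) eval_zero

lemma im_nonpos_of_mem_roots (hf : UStable f) {r : ℂ} (hr : r ∈ f.roots) : r.im ≤ 0 :=
  not_lt.mp fun h => hf r h (isRoot_of_mem_roots hr)

end UStable

lemma ustable_smul_iff {c : ℂ} (hc : c ≠ 0) {f : ℂ[X]} : UStable (c • f) ↔ UStable f := by
  simp only [UStable, eval_smul, smul_eq_mul, ne_eq, mul_eq_zero, hc, false_or]

lemma ustable_or_eq_zero_smul_iff {c : ℂ} (hc : c ≠ 0) {f : ℂ[X]} :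
    (UStable (c • f) ∨ c • f = 0) ↔ (UStable f ∨ f = 0) := by
  rw [ustable_smul_iff hc, smul_eq_zero, or_iff_right hc]

lemma ustable_X_add_C_pow {a : ℂ} (ha : 0 ≤ a.im) (m : ℕ) : UStable ((X + C a) ^ m) := by
  intro z hz h
  have := congrArg Complex.im (pow_eq_zero_iff'.mp (by simpa using h)).1
  simp only [Complex.add_im, Complex.zero_im] at this
  linarith

lemma degree_X_add_C_pow_le (a : ℂ) (m : ℕ) : ((X + C a) ^ m).degree ≤ (m : WithBot ℕ) :=
  degree_le_of_natDegree_le (by simp)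

namespace Polynomial

variable {R A : Type*} [CommSemiring R] [Semiring A] [Algebra R A]

lemma coeff_sum_C_mul_X_pow (L : R[X] →ₗ[R] A) (F : R[X][X]) (k : ℕ) :
    (F.sum fun k c => C (L c) * X ^ k).coeff k = L (F.coeff k) := by
  rw [Polynomial.sum_def, finsetSum_coeff]
  simp only [coeff_C_mul_X_pow, Finset.sum_ite_eq, mem_support_iff]
  split_ifs with h <;> simp_all

def mapCoeffs (L : R[X] →ₗ[R] A) : R[X][X] →ₗ[R] A[X] where
  toFun F := F.sum fun k c => C (L c) * X ^ k
  map_add' F G := by ext k; simp only [coeff_add, coeff_sum_C_mul_X_pow, map_add]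
  map_smul' c F := by
    ext k; simp only [coeff_smul, coeff_sum_C_mul_X_pow, map_smul, RingHom.id_apply]

variable (L : R[X] →ₗ[R] A)

@[simp]
lemma coeff_mapCoeffs (F : R[X][X]) (k : ℕ) : (mapCoeffs L F).coeff k = L (F.coeff k) :=
  coeff_sum_C_mul_X_pow L F k

lemma natDegree_mapCoeffs_le (F : R[X][X]) : (mapCoeffs L F).natDegree ≤ F.natDegree :=
  natDegree_le_iff_coeff_eq_zero.mpr fun k hk => by
    rw [coeff_mapCoeffs, coeff_eq_zero_of_natDegree_lt hk, map_zero]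

lemma eval_algebraMap_mapCoeffs (F : R[X][X]) (w : R) :
    (mapCoeffs L F).eval (algebraMap R A w) = L (F.eval (C w)) := by
  have hF : F.natDegree < F.natDegree + 1 := Nat.lt_succ_self _
  rw [eval_eq_sum_range' hF, eval_eq_sum_range' ((natDegree_mapCoeffs_le L F).trans_lt hF),
    map_sum]
  refine Finset.sum_congr rfl fun k _ => ?_
  rw [coeff_mapCoeffs, ← C_pow, mul_comm, ← smul_eq_C_mul, map_smul, ← map_pow,
    Algebra.smul_def, Algebra.commutes]

lemma derivative_mapCoeffs (F : R[X][X]) :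
    derivative (mapCoeffs L F) = mapCoeffs L (derivative F) := by
  ext k
  simp only [coeff_derivative, coeff_mapCoeffs]
  rw [← Nat.cast_succ, ← Nat.cast_succ, ← nsmul_eq_mul', ← nsmul_eq_mul', map_nsmul]

end Polynomial

lemma evalBiv_eq_eval_eval_C (F : ℂ[X][X]) (z w : ℂ) :
    evalBiv F z w = (F.eval (C w)).eval z := by
  induction F using Polynomial.induction_on' with
  | add p q hp hq => simp_all [evalBiv]
  | monomial k c => simp [evalBiv]

-- `extT T` unfolds to `mapCoeffs T`.
lemma eval_C_extT (T : ℂ[X] →ₗ[ℂ] ℂ[X]) (F : ℂ[X][X]) (w : ℂ) :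
    (extT T F).eval (C w) = T (F.eval (C w)) :=
  eval_algebraMap_mapCoeffs T F w

lemma evalBiv_extT (T : ℂ[X] →ₗ[ℂ] ℂ[X]) (F : ℂ[X][X]) (z w : ℂ) :
    evalBiv (extT T F) z w = (T (F.eval (C w))).eval z := by
  rw [evalBiv_eq_eval_eval_C, eval_C_extT]

section Laguerre

open Complex

lemma norm_add_mul_I_le_iff {u : ℂ} {c : ℝ} (hc : 0 ≤ c) :
    ‖u + c * I‖ ≤ c ↔ normSq u + 2 * c * u.im ≤ 0 := by
  have : normSq (u + c * I) = normSq u + 2 * c * u.im + c ^ 2 := by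
    simp [normSq_apply]; ring
  rw [← pow_le_pow_iff_left₀ (norm_nonneg _) hc two_ne_zero, Complex.sq_norm, this]
  constructor <;> intro h <;> linarith

lemma norm_inv_add_mul_I_le {x : ℂ} {y : ℝ} (hy : 0 < y) (hx : y ≤ x.im) :
    ‖x⁻¹ + ((2 * y)⁻¹ : ℝ) * I‖ ≤ (2 * y)⁻¹ := by
  rw [norm_add_mul_I_le_iff (by positivity), normSq_inv, inv_im]
  have hx0 : 0 < normSq x := normSq_pos.mpr fun h => by simp [h] at hx; linarith
  have : (normSq x)⁻¹ + 2 * (2 * y)⁻¹ * (-x.im / normSq x) = (y - x.im) / (y * normSq x) := by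
    field_simp; ring
  rw [this]
  exact div_nonpos_of_nonpos_of_nonneg (by linarith) (by positivity)

/- `g'(w) / g(w) = ∑ 1 / (w - r)` over the roots `r`, and inversion maps the half-plane
`Im ≥ Im w`, which contains every `w - r`, into the disk of `norm_inv_add_mul_I_le`. -/
lemma UStable.norm_logDeriv_add_mul_I_le {g : ℂ[X]} (hg : UStable g) {w : ℂ} (hw : 0 < w.im) :
    ‖g.derivative.eval w / g.eval w + (g.natDegree * (2 * w.im)⁻¹ : ℝ) * I‖ ≤
      g.natDegree * (2 * w.im)⁻¹ := by
  set c := (2 * w.im)⁻¹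
  have hroot : ∀ r ∈ g.roots, ‖(w - r)⁻¹ + c * I‖ ≤ c := fun r hr =>
    norm_inv_add_mul_I_le hw (by simp; linarith [hg.im_nonpos_of_mem_roots hr])
  have hsum : (g.roots.map fun r => 1 / (w - r)).sum + (g.natDegree * c : ℝ) * I =
      (g.roots.map fun r => (w - r)⁻¹ + c * I).sum := by
    simp [Multiset.sum_map_add, IsAlgClosed.card_roots_eq_natDegree, mul_assoc]
  rw [(IsAlgClosed.splits g).eval_derivative_div_eval_of_ne_zero (hg w hw), hsum]
  calc _ ≤ (g.roots.map fun r => ‖(w - r)⁻¹ + c * I‖).sum :=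
        (norm_multiset_sum_le _).trans_eq (by rw [Multiset.map_map]; rfl)
    _ ≤ Multiset.card (g.roots.map fun r => ‖(w - r)⁻¹ + c * I‖) • c :=
        Multiset.sum_le_card_nsmul _ _ fun x hx => by
          obtain ⟨r, hr, rfl⟩ := Multiset.mem_map.mp hx
          exact hroot r hr
    _ = g.natDegree * c := by simp [IsAlgClosed.card_roots_eq_natDegree]

def polarDerivative (N : ℕ) (a : ℂ) (g : ℂ[X]) : ℂ[X] := N • g + (C a - X) * derivative g

/- Laguerre's theorem. With `u = g'(w) / g(w)`, the disk bound reads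
`Im w ‖u‖² ≤ -(deg g) Im u`, whereas a zero of the polar derivative at `w` would force
`Im (w - a) ‖u‖² = -N Im u`; together they give `Im a ≤ 0`. -/
lemma UStable.polarDerivative {N : ℕ} (hN : N ≠ 0) {g : ℂ[X]} (hg : UStable g)
    (hdeg : g.natDegree ≤ N) {a : ℂ} (ha : 0 < a.im) : UStable (polarDerivative N a g) := by
  intro w hw hzero
  set u := g.derivative.eval w / g.eval w
  have hgw := hg w hw
  have hu : (N : ℂ) + (a - w) * u = 0 := by
    simp only [_root_.polarDerivative, eval_add, eval_mul, eval_sub, eval_C, eval_X,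
      nsmul_eq_mul, eval_natCast] at hzero
    simp only [u]
    field_simp
    linear_combination hzero
  have hdisk := (norm_add_mul_I_le_iff (by positivity)).mp (hg.norm_logDeriv_add_mul_I_le hw)
  have hy : w.im * normSq u + g.natDegree * u.im ≤ 0 := by
    have : w.im * (2 * (g.natDegree * (2 * w.im)⁻¹) * u.im) = g.natDegree * u.im := by
      field_simp
    nlinarith
  have hre := congrArg re hu
  have him := congrArg im hu
  simp only [add_re, add_im, mul_re, mul_im, sub_re, sub_im, natCast_re, natCast_im, zero_re,
    zero_im] at hre him
  have hpolar : -(N * u.im) = (w.im - a.im) * normSq u := by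
    rw [normSq_apply]
    linear_combination (-u.im) * hre + u.re * him
  have hu0 : 0 < normSq u := normSq_pos.mpr fun h => by simp [h, hN] at hu
  have hdN : (g.natDegree : ℝ) ≤ N := by exact_mod_cast hdeg
  have him_nonpos : u.im ≤ 0 := by nlinarith [normSq_nonneg u]
  nlinarith

end Laguerre

section Grace

variable (Λ : ℂ[X] →ₗ[ℂ] ℂ)

lemma eval_mapCoeffs_C_X_add_X_pow (m : ℕ) (w : ℂ) :
    (mapCoeffs Λ ((C X + X) ^ m)).eval w = Λ ((X + C w) ^ m) := by
  have := eval_algebraMap_mapCoeffs Λ ((C X + X) ^ m) w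
  rwa [Algebra.algebraMap_self, RingHom.id_apply, eval_pow, eval_add, eval_C, eval_X] at this

lemma natDegree_mapCoeffs_C_X_add_X_pow_le (m : ℕ) :
    (mapCoeffs Λ ((C X + X) ^ m)).natDegree ≤ m :=
  (natDegree_mapCoeffs_le _ _).trans <| (natDegree_pow_le_of_le m
    (by rw [add_comm, natDegree_X_add_C])).trans_eq (mul_one m)

lemma derivative_mapCoeffs_C_X_add_X_pow (m : ℕ) :
    derivative (mapCoeffs Λ ((C X + X) ^ (m + 1))) = (m + 1) • mapCoeffs Λ ((C X + X) ^ m) := by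
  rw [derivative_mapCoeffs, derivative_pow_succ, ← map_nsmul]
  congr 1
  simp [nsmul_eq_mul]

/- Grace's theorem, in apolarity form. `mapCoeffs Λ ((C X + X) ^ m)` is the polynomial
`w ↦ Λ ((X + w) ^ m)`. Peeling off a factor `X + a` replaces `Λ` by `p ↦ Λ ((X + a) p)`; on
`(X + w) ^ m` this is, up to the factor `m + 1`, the polar derivative with pole `a` of
`w ↦ Λ ((X + w) ^ (m + 1))`, which is nonzero by Laguerre. -/
theorem map_multiset_prod_X_add_C_ne_zero (s : Multiset ℂ) (hs : ∀ a ∈ s, 0 < a.im)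
    (hΛ : ∀ w : ℂ, 0 < w.im → Λ ((X + C w) ^ Multiset.card s) ≠ 0) :
    Λ ((s.map fun a => X + C a).prod) ≠ 0 := by
  induction s using Multiset.induction_on generalizing Λ with
  | empty => simpa using hΛ Complex.I (by simp)
  | cons a s ih =>
    set m := Multiset.card s
    set g := mapCoeffs Λ ((C X + X) ^ (m + 1))
    have hg : UStable g := fun w hw => by
      simpa [g, eval_mapCoeffs_C_X_add_X_pow] using hΛ w hw
    have hpolar : ∀ w, (polarDerivative (m + 1) a g).eval w =
        (m + 1) * Λ ((X + C a) * (X + C w) ^ m) := fun w => by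
      have : (X + C a) * (X + C w) ^ m = (X + C w) ^ (m + 1) + (a - w) • (X + C w) ^ m := by
        rw [smul_eq_C_mul, C_sub]; ring
      simp only [polarDerivative, g, derivative_mapCoeffs_C_X_add_X_pow, eval_add, eval_mul,
        eval_smul, eval_sub, eval_C, eval_X, eval_mapCoeffs_C_X_add_X_pow, this, map_add, map_smul,
        smul_eq_mul]
      simp only [nsmul_eq_mul]
      push_cast; ring
    have hΛa : ∀ w : ℂ, 0 < w.im → (Λ ∘ₗ LinearMap.mulLeft ℂ (X + C a)) ((X + C w) ^ m) ≠ 0 :=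
      fun w hw h => hg.polarDerivative m.succ_ne_zero (natDegree_mapCoeffs_C_X_add_X_pow_le Λ _)
        (hs a (Multiset.mem_cons_self a s)) w hw
        (by rw [hpolar]; exact mul_eq_zero_of_right _ h)
    simpa using ih (Λ ∘ₗ LinearMap.mulLeft ℂ (X + C a))
      (fun b hb => hs b (Multiset.mem_cons_of_mem hb)) hΛa

end Grace

lemma natDegree_eval_C_le {R : Type*} [CommSemiring R] (F : R[X][X]) (w : R) :
    (F.eval (C w)).natDegree ≤ F.support.sup fun k => (F.coeff k).natDegree := by
  rw [eval_eq_sum, Polynomial.sum_def]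
  refine natDegree_sum_le_of_forall_le _ _ fun k hk => ?_
  rw [← C_pow]
  exact (natDegree_mul_C_le _ _).trans (Finset.le_sup (f := fun k => (F.coeff k).natDegree) hk)

lemma norm_eval_le_pow_mul_norm_eval {𝕜 : Type*} [NormedField 𝕜] [IsAlgClosed 𝕜] {q : 𝕜[X]}
    {z z₀ : 𝕜} {K : ℝ} (hK : 1 ≤ K) {D : ℕ} (hD : q.natDegree ≤ D)
    (h : ∀ r ∈ q.roots, ‖z - r‖ ≤ K * ‖z₀ - r‖) :
    ‖q.eval z‖ ≤ K ^ D * ‖q.eval z₀‖ := by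
  have hsplit := IsAlgClosed.splits q
  have hprod : ∀ x : 𝕜, ‖(q.roots.map (x - ·)).prod‖ = (q.roots.map fun r => ‖x - r‖).prod :=
    fun x => by simpa [Multiset.map_map] using map_multiset_prod normHom (q.roots.map (x - ·))
  rw [hsplit.eval_eq_prod_roots, hsplit.eval_eq_prod_roots, norm_mul, norm_mul, hprod, hprod,
    mul_left_comm]
  refine mul_le_mul_of_nonneg_left ?_ (norm_nonneg _)
  calc (q.roots.map fun r => ‖z - r‖).prod ≤ (q.roots.map fun r => K * ‖z₀ - r‖).prod :=
        Multiset.prod_map_le_prod_map₀ _ _ (fun _ _ => norm_nonneg _) h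
    _ = K ^ q.natDegree * (q.roots.map fun r => ‖z₀ - r‖).prod := by
        simp [Multiset.prod_map_mul, IsAlgClosed.card_roots_eq_natDegree]
    _ ≤ K ^ D * (q.roots.map fun r => ‖z₀ - r‖).prod :=
        mul_le_mul_of_nonneg_right (pow_le_pow_right₀ hK hD)
          (Multiset.prod_nonneg fun _ hx => by
            obtain ⟨r, -, rfl⟩ := Multiset.mem_map.mp hx; exact norm_nonneg _)

lemma norm_sub_le_of_im_nonpos {z z₀ r : ℂ} (hr : r.im ≤ 0) (hz : ‖z - z₀‖ ≤ z₀.im / 2) :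
    ‖z - r‖ ≤ 3 / 2 * ‖z₀ - r‖ := by
  have : z₀.im ≤ ‖z₀ - r‖ := by
    have := Complex.im_le_norm (z₀ - r)
    simp only [Complex.sub_im] at this
    linarith
  linarith [norm_sub_le_norm_sub_add_norm_sub z z₀ r]

/- Hurwitz-type limit. The roots of `Q(·, t)` lie in the closed lower half-plane, so on the disk
of radius `Im z₀ / 2` about `z₀` we have `‖Q(z, t)‖ ≤ (3/2)^D ‖Q(z₀, t)‖`; as `t → 0⁺`, a zero of
`Q(·, 0)` at `z₀` spreads to the whole disk. -/
theorem ustable_or_eq_zero_eval_C_zero (Q : ℂ[X][X])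
    (hQ : ∀ t : ℝ, 0 < t → UStable (Q.eval (C (t : ℂ)))) :
    UStable (Q.eval (C 0)) ∨ Q.eval (C 0) = 0 := by
  rw [or_iff_not_imp_right]
  intro hne z₀ hz₀ hroot
  apply hne
  set D := Q.support.sup fun k => (Q.coeff k).natDegree
  have hcont : ∀ z : ℂ, Continuous fun t : ℝ => ‖evalBiv Q z t‖ := fun z =>
    ((Polynomial.continuous _).comp Complex.continuous_ofReal).norm
  have hball : Metric.closedBall z₀ (z₀.im / 2) ⊆ {z | (Q.eval (C 0)).IsRoot z} := by
    intro z hz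
    rw [Metric.mem_closedBall, dist_eq_norm] at hz
    have hbound : ∀ t : ℝ, 0 < t → ‖evalBiv Q z t‖ ≤ (3 / 2) ^ D * ‖evalBiv Q z₀ t‖ :=
      fun t ht => by
        simpa only [evalBiv_eq_eval_eval_C] using norm_eval_le_pow_mul_norm_eval (by norm_num)
          (natDegree_eval_C_le Q _) fun r hr =>
            norm_sub_le_of_im_nonpos ((hQ t ht).im_nonpos_of_mem_roots hr) hz
    have hlim := le_of_tendsto_of_tendsto
      (((hcont z).tendsto 0).mono_left nhdsWithin_le_nhds)
      ((((hcont z₀).const_mul _).tendsto 0).mono_left nhdsWithin_le_nhds)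
      (eventually_nhdsWithin_of_forall (s := Set.Ioi 0) hbound)
    simp only [Complex.ofReal_zero, evalBiv_eq_eval_eval_C, hroot, norm_zero, mul_zero] at hlim
    exact norm_le_zero_iff.mp hlim
  exact eq_zero_of_infinite_isRoot _ <| Set.Infinite.mono hball <|
    infinite_of_mem_nhds z₀ (Metric.closedBall_mem_nhds z₀ (by linarith))

/- `H(z, t) = f(z + i t) (1 + t (z + i))^(n - deg f)`; for `t > 0` its roots `r - i t` and
`-i - 1/t` lie in the open lower half-plane. -/
open Complex in
lemma UStable.exists_deformation {f : ℂ[X]} (hf : UStable f) {n : ℕ} (hn : f.natDegree ≤ n) :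
    ∃ H : ℂ[X][X], H.eval (C 0) = f ∧ ∀ t : ℝ, 0 < t → ∃ c : ℂ, c ≠ 0 ∧
      ∃ s : Multiset ℂ, Multiset.card s = n ∧ (∀ a ∈ s, 0 < a.im) ∧
        H.eval (C (t : ℂ)) = c • (s.map (X + C ·)).prod := by
  set d := f.natDegree
  refine ⟨C (C f.leadingCoeff) * (f.roots.map fun r => C (X - C r) + C (C I) * X).prod *
    (C (X + C I) * X + 1) ^ (n - d), ?_, fun t ht => ?_⟩
  · simp only [map_zero, eval_mul, eval_C, eval_multiset_prod, Multiset.map_map,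
      Function.comp_apply, eval_add, eval_X, mul_zero, add_zero, eval_pow, eval_one,
      zero_add, one_pow, mul_one]
    exact (IsAlgClosed.splits f).eq_prod_roots.symm
  have ht0 : (t : ℂ) ≠ 0 := ofReal_ne_zero.mpr ht.ne'
  refine ⟨f.leadingCoeff * t ^ (n - d), mul_ne_zero (leadingCoeff_ne_zero.mpr hf.ne_zero)
    (pow_ne_zero _ ht0),
    f.roots.map (fun r => I * t - r) + Multiset.replicate (n - d) (I + (t : ℂ)⁻¹), ?_, ?_, ?_⟩
  · simp [IsAlgClosed.card_roots_eq_natDegree, d]; omega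
  · intro a ha
    rcases Multiset.mem_add.mp ha with ha | ha
    · obtain ⟨r, hr, rfl⟩ := Multiset.mem_map.mp ha
      simp only [sub_im, mul_im, I_re, I_im, ofReal_re, ofReal_im]
      linarith [hf.im_nonpos_of_mem_roots hr]
    · rw [Multiset.eq_of_mem_replicate ha]
      simp [← ofReal_inv]
  · have hlin : ∀ r : ℂ, (X : ℂ[X]) - C r + C I * C (t : ℂ) = X + C (I * (t : ℂ) - r) :=
      fun r => by simp only [← C_mul, C_sub]; ring
    have hextra :
        ((X + C I) * C (t : ℂ) + 1 : ℂ[X]) = C (t : ℂ) * (X + C (I + (t : ℂ)⁻¹)) := by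
      have : C (t : ℂ) * C (t : ℂ)⁻¹ = 1 := by rw [← C_mul, mul_inv_cancel₀ ht0, C_1]
      rw [C_add]
      linear_combination -this
    simp only [eval_mul, eval_C, eval_multiset_prod, Multiset.map_map, Function.comp_def,
      eval_add, eval_X, eval_pow, eval_one, hlin, hextra, Multiset.map_add, Multiset.prod_add,
      Multiset.map_replicate, Multiset.prod_replicate, smul_eq_C_mul, mul_pow, C_mul, C_pow]
    ring

theorem ustable_or_eq_zero_of_bStable {n : ℕ} {T : ℂ[X] →ₗ[ℂ] ℂ[X]}
    (hT : BStable (extT T ((C X + X) ^ n))) {f : ℂ[X]} (hdeg : f.natDegree ≤ n)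
    (hf : UStable f) :
    UStable (T f) ∨ T f = 0 := by
  obtain ⟨H, hH₀, hH⟩ := hf.exists_deformation hdeg
  have := ustable_or_eq_zero_eval_C_zero (extT T H) fun t ht => ?_
  · rwa [eval_C_extT, hH₀] at this
  obtain ⟨c, hc, s, hcard, hs, hHs⟩ := hH t ht
  rw [eval_C_extT, hHs, map_smul, ustable_smul_iff hc]
  intro z hz
  exact map_multiset_prod_X_add_C_ne_zero (leval z ∘ₗ T) s hs fun w hw => by
    simpa [hcard, evalBiv_extT] using hT z w hz hw

lemma norm_eval_le_mul_norm_pow {𝕜 : Type*} [NormedField 𝕜] {p : 𝕜[X]} {n : ℕ}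
    (hp : p.natDegree ≤ n) {y : ℝ} (hy : 0 < y) {x : 𝕜} (hx : y ≤ ‖x‖) :
    ‖p.eval x‖ ≤ (∑ k ∈ Finset.range (n + 1), ‖p.coeff k‖ / y ^ (n - k)) * ‖x‖ ^ n := by
  rw [eval_eq_sum_range' (Nat.lt_succ_of_le hp), Finset.sum_mul]
  refine (norm_sum_le _ _).trans (Finset.sum_le_sum fun k hk => ?_)
  have hkn : k ≤ n := Nat.lt_succ_iff.mp (Finset.mem_range.mp hk)
  have hxk : ‖x‖ ^ k * y ^ (n - k) ≤ ‖x‖ ^ n := by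
    calc ‖x‖ ^ k * y ^ (n - k) ≤ ‖x‖ ^ k * ‖x‖ ^ (n - k) := by gcongr
      _ = ‖x‖ ^ n := by rw [← pow_add, Nat.add_sub_cancel' hkn]
  rw [norm_mul, norm_pow, div_mul_eq_mul_div, le_div_iff₀ (by positivity), mul_assoc]
  gcongr

/- On the upper half-plane `‖z + w₀‖ > Im w₀`, so `(z + w₀)^n` dominates `ε h(z)` once `ε` is
small, by `norm_eval_le_mul_norm_pow` applied to `h` expanded around `-w₀`. -/
lemma exists_ustable_X_add_C_pow_add_smul {w₀ : ℂ} (hw₀ : 0 < w₀.im) {n : ℕ} {h : ℂ[X]}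
    (hh : h.natDegree ≤ n) : ∃ ε : ℂ, ε ≠ 0 ∧ UStable ((X + C w₀) ^ n + ε • h) := by
  set p := taylor (-w₀) h
  set M := ∑ k ∈ Finset.range (n + 1), ‖p.coeff k‖ / w₀.im ^ (n - k)
  have hM : 0 ≤ M := Finset.sum_nonneg fun k _ => by positivity
  refine ⟨((M + 1)⁻¹ : ℝ), by norm_cast; positivity, fun z hz hzero => ?_⟩
  set x := z + w₀
  have hx : w₀.im < ‖x‖ := by
    have := Complex.im_le_norm x
    simp only [x, Complex.add_im] at this
    linarith
  have hxn : 0 < ‖x‖ ^ n := pow_pos (hw₀.trans hx) n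
  have hpx : p.eval x = h.eval z := by rw [taylor_eval, add_neg_cancel_right]
  have hbound :=
    norm_eval_le_mul_norm_pow (p := p) (n := n) (by rwa [natDegree_taylor]) hw₀ hx.le
  have hxeq : ‖x‖ ^ n = (M + 1)⁻¹ * ‖h.eval z‖ := by
    have : x ^ n = -(((M + 1)⁻¹ : ℝ) : ℂ) * h.eval z := by
      simp only [eval_add, eval_pow, eval_X, eval_C, eval_smul, smul_eq_mul] at hzero
      linear_combination hzero
    rw [← norm_pow, this, norm_mul, norm_neg, Complex.norm_real,
      Real.norm_of_nonneg (by positivity)]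
  rw [hpx] at hbound
  have : ‖x‖ ^ n < ‖x‖ ^ n :=
    calc ‖x‖ ^ n = (M + 1)⁻¹ * ‖h.eval z‖ := hxeq
      _ ≤ (M + 1)⁻¹ * (M * ‖x‖ ^ n) := by gcongr
      _ < ‖x‖ ^ n := by rw [inv_mul_lt_iff₀ (by positivity)]; linarith
  exact lt_irrefl _ this

lemma exists_eq_smul_of_ustable_or_eq_zero (T : ℂ[X] →ₗ[ℂ] ℂ[X]) (p : Submodule ℂ ℂ[X])
    (hT : ∀ f ∈ p, UStable (T f) ∨ T f = 0) :
    ∃ (α : ℂ[X] →ₗ[ℂ] ℂ) (P : ℂ[X]), UStable P ∧ ∀ f ∈ p, T f = α f • P := by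
  by_cases h₀ : ∃ f₀ ∈ p, T f₀ ≠ 0
  · obtain ⟨f₀, hf₀, hTf₀⟩ := h₀
    have hP := (hT f₀ hf₀).resolve_right hTf₀
    have hPI := hP Complex.I (by simp)
    refine ⟨((T f₀).eval Complex.I)⁻¹ • (leval Complex.I ∘ₗ T), T f₀, hP, fun f hf => ?_⟩
    set c := ((T f₀).eval Complex.I)⁻¹ * (T f).eval Complex.I
    have hI : (T (f - c • f₀)).eval Complex.I = 0 := by
      simp only [map_sub, map_smul, eval_sub, eval_smul, smul_eq_mul, c]
      field_simp
      ring
    have := (hT _ (p.sub_mem hf (p.smul_mem c hf₀))).resolve_left fun h => h _ (by simp) hI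
    rw [map_sub, map_smul, sub_eq_zero] at this
    simpa using this
  · push Not at h₀
    exact ⟨0, 1, fun _ _ => by simp, fun f hf => by simp [h₀ f hf]⟩

lemma ustable_or_eq_zero_of_apply_X_add_C_pow_eq_zero {n : ℕ} {T : ℂ[X] →ₗ[ℂ] ℂ[X]}
    (H : ∀ f : ℂ[X], f.degree ≤ n → UStable f → UStable (T f) ∨ T f = 0) {w₀ : ℂ}
    (hw₀ : 0 < w₀.im) (hT : T ((X + C w₀) ^ n) = 0) {h : ℂ[X]} (hh : h.degree ≤ n) :
    UStable (T h) ∨ T h = 0 := by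
  obtain ⟨ε, hε, hstable⟩ :=
    exists_ustable_X_add_C_pow_add_smul hw₀ (natDegree_le_of_degree_le hh)
  have := H _ (degree_add_le_of_degree_le (degree_X_add_C_pow_le w₀ n)
    ((degree_smul_le ε h).trans hh)) hstable
  rwa [map_add, hT, zero_add, map_smul, ustable_or_eq_zero_smul_iff hε] at this

theorem rankOne_or_bStable_of_forall_ustable {n : ℕ} {T : ℂ[X] →ₗ[ℂ] ℂ[X]}
    (H : ∀ f : ℂ[X], f.degree ≤ n → UStable f → UStable (T f) ∨ T f = 0) :
    (∃ (α : ℂ[X] →ₗ[ℂ] ℂ) (P : ℂ[X]), UStable P ∧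
        ∀ f : ℂ[X], f.degree ≤ n → T f = α f • P) ∨
      BStable (extT T ((C X + X) ^ n)) := by
  by_cases hzero : ∃ w₀ : ℂ, 0 < w₀.im ∧ T ((X + C w₀) ^ n) = 0
  · obtain ⟨w₀, hw₀, hT⟩ := hzero
    left
    simpa only [mem_degreeLE] using exists_eq_smul_of_ustable_or_eq_zero T (degreeLE ℂ n)
      fun f hf => ustable_or_eq_zero_of_apply_X_add_C_pow_eq_zero H hw₀ hT (mem_degreeLE.mp hf)
  · push Not at hzero
    right
    intro z w hz hw
    have := (H _ (degree_X_add_C_pow_le w n) (ustable_X_add_C_pow hw.le n)).resolve_right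
      (hzero w hw)
    simpa [evalBiv_extT] using this z hz

/-- **Theorem (finite-degree stability preservers).**
`T : ℂ_n[z] → ℂ[z]` maps every stable polynomial of degree at most `n` to a stable
polynomial or to `0` iff either (a) `T(f) = α(f)P` on `ℂ_n[z]` with `α` a linear
functional and `P` stable, or (b) `T[(z+w)^n]` is stable. -/
theorem stmt_0 (n : ℕ) (T : Polynomial ℂ →ₗ[ℂ] Polynomial ℂ) :
    (∀ f : Polynomial ℂ, f.degree ≤ (n : WithBot ℕ) → UStable f →
      (UStable (T f) ∨ T f = 0)) ↔
    ((∃ (α : Polynomial ℂ →ₗ[ℂ] ℂ) (P : Polynomial ℂ), UStable P ∧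
        ∀ f : Polynomial ℂ, f.degree ≤ (n : WithBot ℕ) → T f = α f • P) ∨
      BStable (extT T ((Polynomial.C Polynomial.X + Polynomial.X) ^ n))) := by
  refine ⟨rankOne_or_bStable_of_forall_ustable, ?_⟩
  rintro (⟨α, P, hP, hT⟩ | hT) f hdeg hf
  · rw [hT f hdeg]
    rcases eq_or_ne (α f) 0 with hα | hα
    · simp [hα]
    · exact Or.inl ((ustable_smul_iff hα).mpr hP)
  · exact ustable_or_eq_zero_of_bStable hT (natDegree_le_of_degree_le hdeg) hf
end
end

section
/- Let n ∈ ℕ and suppose the linear operator T : ℝ_{n+1}[z] → ℝ[z] maps every hyperbolic polynomial of degree at most n+1 to a hyperbolic polynomial or to 0. If there exists a strictly hyperbolic polynomial f of degree n or n+1 with T(f) = 0, then T(g) is hyperbolic or 0 for every g ∈ ℝ[z] with deg g ≤ n+1. -/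
open Polynomial

noncomputable section

/-- A real polynomial is strictly hyperbolic if it is hyperbolic with all zeros
distinct (i.e. it is squarefree). -/
def StrictlyHyperbolic (p : Polynomial ℝ) : Prop := Hyperbolic p ∧ Squarefree p

-- Auxiliary lemmas


-- factorization lemma
lemma factor_roots (p : Polynomial ℝ) (hp : p ≠ 0) :
    ∃ q : Polynomial ℝ, p = (p.roots.map fun a => X - C a).prod * q ∧ q.roots = 0 ∧
      p.natDegree = p.roots.card + q.natDegree := by
  obtain ⟨q, hq⟩ := p.prod_multiset_X_sub_C_dvd
  have hq0 : q ≠ 0 := by rintro rfl; rw [mul_zero] at hq; exact hp hq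
  have hprod0 : (p.roots.map fun a => X - C a).prod ≠ 0 := by
    intro h; rw [h, zero_mul] at hq; exact hp hq
  have hroots : p.roots = p.roots + q.roots := by
    conv_lhs => rw [hq]
    rw [roots_mul (hq ▸ hp), roots_multiset_prod_X_sub_C]
  refine ⟨q, hq, ?_, ?_⟩
  · have := left_eq_add.mp hroots
    exact this
  · have h2 := natDegree_mul hprod0 hq0
    rw [← hq] at h2
    rw [h2, natDegree_multiset_prod_X_sub_C_eq_card]

lemma no_roots_natDegree_le_one (q : Polynomial ℝ) (hq0 : q ≠ 0) (hr : q.roots = 0)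
    (hd : q.natDegree ≤ 1) : q.natDegree = 0 := by
  by_contra h
  have h1 : q.natDegree = 1 := by omega
  have hc1 : q.coeff 1 ≠ 0 := by
    have := mt leadingCoeff_eq_zero.mp hq0
    rwa [leadingCoeff, h1] at this
  have hdeg : q.degree ≤ 1 := by
    rw [degree_eq_natDegree hq0, h1]; exact_mod_cast le_refl (1:ℕ)
  have hqe := eq_X_add_C_of_degree_le_one hdeg
  have : q.eval (-(q.coeff 0) / q.coeff 1) = 0 := by
    rw [hqe]; simp; field_simp; ring
  have : (-(q.coeff 0) / q.coeff 1) ∈ q.roots := by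
    rw [mem_roots hq0]; exact this
  rw [hr] at this; simp at this

lemma hyperbolic_of_card (p : Polynomial ℝ) (hp : p ≠ 0)
    (h : p.natDegree ≤ p.roots.card + 1) : Hyperbolic p := by
  obtain ⟨q, hq, hqr, hdeg⟩ := factor_roots p hp
  have hq0 : q ≠ 0 := by rintro rfl; rw [mul_zero] at hq; exact hp hq
  have hq1 : q.natDegree = 0 := no_roots_natDegree_le_one q hq0 hqr (by omega)
  obtain ⟨c, rfl⟩ := natDegree_eq_zero.mp hq1
  have hc : c ≠ 0 := by rintro rfl; simp at hq0
  refine ⟨hp, fun z hz => ?_⟩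
  rw [hq] at hz
  simp only [map_mul, map_multiset_prod, Multiset.map_map] at hz
  rcases mul_eq_zero.mp hz with h1 | h1
  · have h2 : (0 : ℂ) ∈ _ := Multiset.prod_eq_zero_iff.mp h1
    obtain ⟨r, hr, hr0⟩ := Multiset.mem_map.mp h2
    simp only [Function.comp, map_sub, aeval_X, aeval_C] at hr0
    have : z = (algebraMap ℝ ℂ) r := sub_eq_zero.mp hr0
    rw [this]; simp
  · simp only [aeval_C] at h1
    exact absurd h1 (by simpa using hc)

lemma card_roots_of_hyperbolic (p : Polynomial ℝ) (hyp : Hyperbolic p) :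
    p.roots.card = p.natDegree := by
  obtain ⟨hp, hz⟩ := hyp
  obtain ⟨q, hq, hqr, hdeg⟩ := factor_roots p hp
  have hq0 : q ≠ 0 := by rintro rfl; rw [mul_zero] at hq; exact hp hq
  suffices h : q.natDegree = 0 by omega
  by_contra h
  have hqc : 0 < (q.map (algebraMap ℝ ℂ)).degree := by
    rw [degree_map, degree_eq_natDegree hq0]
    exact_mod_cast Nat.pos_of_ne_zero h
  obtain ⟨z, hzr⟩ := Complex.exists_root hqc
  have hzq : (aeval z) q = 0 := by
    rw [aeval_def, eval₂_eq_eval_map]; exact hzr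
  have hzp : (aeval z) p = 0 := by rw [hq, map_mul, hzq, mul_zero]
  have him := hz z hzp
  have hzre : z = (algebraMap ℝ ℂ) z.re := by
    simp [Complex.ext_iff, him]
  rw [hzre, aeval_algebraMap_apply] at hzq
  have hre : z.re ∈ q.roots := by
    rw [mem_roots hq0]
    have h0 : (aeval z.re) q = 0 :=
      (map_eq_zero_iff (algebraMap ℝ ℂ) (algebraMap ℝ ℂ).injective).mp hzq
    simpa [IsRoot, aeval_def, eval₂_eq_eval_map] using h0
  rw [hqr] at hre; simp at hre


lemma sign_pres (a b : ℝ) (h : |b| < |a|) : 0 < (a + b) * a := by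
  have h1 : -(|a| * |b|) ≤ a * b := by
    rw [← abs_mul]; exact neg_abs_le _
  have h2 : |a| * |b| < |a| * |a| :=
    mul_lt_mul_of_pos_left h ((abs_nonneg b).trans_lt h)
  rw [abs_mul_abs_self] at h2
  nlinarith

lemma eps_bound (F G ε : ℝ) (hF : F ≠ 0) (hε : 0 < ε)
    (h : ε ≤ |F| / (2 * (|G| + 1))) : |ε * G| < |F| := by
  have hG : 0 ≤ |G| := abs_nonneg G
  have hF0 : 0 < |F| := abs_pos.mpr hF
  rw [abs_mul, abs_of_pos hε]
  rw [le_div_iff₀ (by positivity)] at h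
  nlinarith

lemma exists_perturb (f g : Polynomial ℝ) (hf0 : f ≠ 0)
    (hcard : f.roots.card = f.natDegree) (hnd : f.roots.Nodup) :
    ∃ ε : ℝ, 0 < ε ∧ f + ε • g ≠ 0 ∧ f.natDegree ≤ (f + ε • g).roots.card := by
  classical
  have heval : ∀ (e : ℝ) (x : ℝ), (f + e • g).eval x = f.eval x + e * g.eval x := by
    intro e x; simp
  by_cases hm : f.natDegree = 0
  · obtain ⟨cc, rfl⟩ := natDegree_eq_zero.mp hm
    have hc : cc ≠ 0 := by rintro rfl; simp at hf0
    set ε := |cc| / (2 * (|g.eval 0| + 1)) with hε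
    have hε0 : 0 < ε := by positivity
    have hb : |ε * g.eval 0| < |cc| := by
      have := eps_bound cc (g.eval 0) ε hc hε0 (le_refl _)
      simpa using this
    refine ⟨ε, hε0, ?_, by simp [hm]⟩
    intro h0
    have : (C cc + ε • g).eval 0 = 0 := by rw [h0]; simp
    rw [heval] at this
    simp only [eval_C] at this
    rw [show ε * g.eval 0 = -cc by linarith] at hb
    simp at hb
  -- main case
  set S := f.roots.toFinset with hSdef
  have hS : S.Nonempty := by
    rw [hSdef, Multiset.toFinset_nonempty]
    intro h0
    rw [h0] at hcard; simp at hcard; omega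
  have hfac : ∀ r ∈ S, ∃ Q : Polynomial ℝ, f = (X - C r) * Q ∧ Q.eval r ≠ 0 := by
    intro r hr
    have hr' : r ∈ f.roots := Multiset.mem_toFinset.mp hr
    have hmult : rootMultiplicity r f = 1 := by
      rw [← count_roots]
      exact Multiset.count_eq_one_of_mem hnd hr'
    refine ⟨f /ₘ (X - C r) ^ rootMultiplicity r f, ?_, ?_⟩
    · conv_lhs => rw [← pow_mul_divByMonic_rootMultiplicity_eq f r]
      rw [hmult, pow_one]
    · exact eval_divByMonic_pow_rootMultiplicity_ne_zero r hf0
  choose! Q hQ hQr using hfac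
  have hnbr : ∀ r ∈ S, ∃ dd : ℝ, 0 < dd ∧
      ∀ x : ℝ, |x - r| ≤ dd → 0 < (Q r).eval x * (Q r).eval r := by
    intro r hr
    have hcont : ContinuousAt (fun x => (Q r).eval x) r :=
      (Q r).continuous.continuousAt
    have hpos : 0 < |(Q r).eval r| := abs_pos.mpr (hQr r hr)
    obtain ⟨dd, hdd, hball⟩ := Metric.continuousAt_iff.mp hcont _ hpos
    refine ⟨dd / 2, by positivity, fun x hx => ?_⟩
    have h1 := hball (show dist x r < dd by rw [Real.dist_eq]; linarith)
    rw [Real.dist_eq] at h1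
    have h2 := sign_pres ((Q r).eval r) ((Q r).eval x - (Q r).eval r) h1
    nlinarith
  choose! d hd hdp using hnbr
  have hSS : (S ×ˢ S).Nonempty := hS.product hS
  set sep := (S ×ˢ S).inf' hSS (fun p => if p.1 = p.2 then 1 else |p.1 - p.2| / 3) with hsepd
  have hsep0 : 0 < sep := by
    rw [hsepd, Finset.lt_inf'_iff]
    rintro ⟨a, b⟩ _
    dsimp only
    split
    · norm_num
    · next hne =>
        have h1 : a - b ≠ 0 := sub_ne_zero.mpr hne
        positivity
  have hsep_le : ∀ r ∈ S, ∀ r' ∈ S, r ≠ r' → sep ≤ |r - r'| / 3 := by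
    intro r hr r' hr' hne
    have h1 := Finset.inf'_le (fun p : ℝ × ℝ => if p.1 = p.2 then 1 else |p.1 - p.2| / 3)
      (show (r, r') ∈ S ×ˢ S from Finset.mem_product.mpr ⟨hr, hr'⟩)
    simpa only [if_neg hne] using h1
  set δ := min sep (S.inf' hS d) with hδd
  have hδ0 : 0 < δ := lt_min hsep0 (by rw [Finset.lt_inf'_iff]; exact hd)
  have hδle : ∀ r ∈ S, δ ≤ d r := fun r hr =>
    (min_le_right _ _).trans (Finset.inf'_le _ hr)
  have hδsep : ∀ r ∈ S, ∀ r' ∈ S, r ≠ r' → 3 * δ ≤ |r - r'| := by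
    intro r hr r' hr' hne
    have h1 : δ ≤ sep := min_le_left _ _
    have h2 := hsep_le r hr r' hr' hne
    linarith
  have hends : ∀ r ∈ S, f.eval (r - δ) * f.eval (r + δ) < 0 := by
    intro r hr
    have h1 := hdp r hr (r - δ)
      (by rw [show r - δ - r = -δ by ring, abs_neg, abs_of_pos hδ0]; exact hδle r hr)
    have h2 := hdp r hr (r + δ)
      (by rw [show r + δ - r = δ by ring, abs_of_pos hδ0]; exact hδle r hr)
    have hQQ : 0 < (Q r).eval (r - δ) * (Q r).eval (r + δ) := by
      nlinarith [mul_pos h1 h2, mul_self_pos.mpr (hQr r hr)]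
    have hfm : f.eval (r - δ) = -δ * (Q r).eval (r - δ) := by
      conv_lhs => rw [hQ r hr]
      simp only [eval_mul, eval_sub, eval_X, eval_C]; ring
    have hfp : f.eval (r + δ) = δ * (Q r).eval (r + δ) := by
      conv_lhs => rw [hQ r hr]
      simp only [eval_mul, eval_sub, eval_X, eval_C]; ring
    rw [hfm, hfp]
    nlinarith [mul_pos (mul_pos hδ0 hδ0) hQQ]
  set E := S.image (fun r => r - δ) ∪ S.image (fun r => r + δ) with hEd
  obtain ⟨r0, hr0⟩ := hS
  have hEne : E.Nonempty :=
    ⟨r0 - δ, Finset.mem_union_left _ (Finset.mem_image_of_mem _ hr0)⟩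
  have hfE : ∀ x ∈ E, f.eval x ≠ 0 := by
    intro x hx h0
    rcases Finset.mem_union.mp hx with hx' | hx' <;>
      obtain ⟨r, hr, rfl⟩ := Finset.mem_image.mp hx' <;>
      have h1 := hends r hr
    · rw [h0, zero_mul] at h1; exact lt_irrefl _ h1
    · rw [h0, mul_zero] at h1; exact lt_irrefl _ h1
  set ε := E.inf' hEne (fun x => |f.eval x| / (2 * (|g.eval x| + 1))) with hεd
  have hε0 : 0 < ε := by
    rw [hεd, Finset.lt_inf'_iff]
    intro x hx
    have h1 : 0 < |f.eval x| := abs_pos.mpr (hfE x hx)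
    positivity
  have hεb : ∀ x ∈ E, |ε * g.eval x| < |f.eval x| := fun x hx =>
    eps_bound _ _ _ (hfE x hx) hε0 (Finset.inf'_le _ hx)
  have hsame : ∀ x ∈ E, 0 < (f + ε • g).eval x * f.eval x := by
    intro x hx
    rw [heval]
    exact sign_pres (f.eval x) (ε * g.eval x) (hεb x hx)
  have hmem1 : ∀ r ∈ S, (r - δ) ∈ E :=
    fun r hr => Finset.mem_union_left _ (Finset.mem_image_of_mem _ hr)
  have hmem2 : ∀ r ∈ S, (r + δ) ∈ E :=
    fun r hr => Finset.mem_union_right _ (Finset.mem_image_of_mem _ hr)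
  have hne0 : f + ε • g ≠ 0 := by
    intro h0
    have h1 := hsame _ (hmem1 r0 hr0)
    rw [h0] at h1; simp at h1
  have hroot : ∀ r ∈ S, ∃ cr ∈ Set.Ioo (r - δ) (r + δ), (f + ε • g).eval cr = 0 := by
    intro r hr
    have h1 := hsame _ (hmem1 r hr)
    have h2 := hsame _ (hmem2 r hr)
    have h3 := hends r hr
    have hlt : r - δ ≤ r + δ := by linarith
    have hcont : ContinuousOn (fun x => (f + ε • g).eval x) (Set.Icc (r - δ) (r + δ)) :=
      (f + ε • g).continuous.continuousOn
    have hprod : (f + ε • g).eval (r - δ) * (f + ε • g).eval (r + δ) < 0 := by nlinarith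
    rcases mul_neg_iff.mp hprod with ⟨hp1, hp2⟩ | ⟨hp1, hp2⟩
    · obtain ⟨cr, hcr, hcr0⟩ := intermediate_value_Ioo' hlt hcont
        (Set.mem_Ioo.mpr ⟨hp2, hp1⟩)
      exact ⟨cr, hcr, hcr0⟩
    · obtain ⟨cr, hcr, hcr0⟩ := intermediate_value_Ioo hlt hcont
        (Set.mem_Ioo.mpr ⟨hp1, hp2⟩)
      exact ⟨cr, hcr, hcr0⟩
  choose! c hc1 hc2 using hroot
  have hinj : Set.InjOn c S := by
    intro a ha b hb hab
    by_contra hne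
    obtain ⟨ha1, ha2⟩ := Set.mem_Ioo.mp (hc1 a ha)
    obtain ⟨hb1, hb2⟩ := Set.mem_Ioo.mp (hc1 b hb)
    rw [hab] at ha1 ha2
    have h3 := hδsep a ha b hb hne
    have habs : |a - b| < 2 * δ := by
      rw [abs_sub_lt_iff]; constructor <;> linarith
    linarith
  have hsub : S.image c ⊆ (f + ε • g).roots.toFinset := by
    intro x hx
    obtain ⟨r, hr, rfl⟩ := Finset.mem_image.mp hx
    rw [Multiset.mem_toFinset, mem_roots hne0]
    exact hc2 r hr
  refine ⟨ε, hε0, hne0, ?_⟩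
  calc f.natDegree = Multiset.card f.roots := hcard.symm
    _ = S.card := (Multiset.toFinset_card_of_nodup hnd).symm
    _ = (S.image c).card := (Finset.card_image_of_injOn hinj).symm
    _ ≤ (f + ε • g).roots.toFinset.card := Finset.card_le_card hsub
    _ ≤ Multiset.card (f + ε • g).roots := Multiset.toFinset_card_le _



/-- **Lemma (degenerate hyperbolicity preservers).** Suppose
`T : ℝ_{n+1}[z] → ℝ[z]` maps every hyperbolic polynomial of degree at most `n+1` to a
hyperbolic polynomial or to `0`, and `T` annihilates some strictly hyperbolic
polynomial of degree `n` or `n+1`. Then `T(g)` is hyperbolic or `0` for every `g` of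
degree at most `n+1`. -/
theorem stmt_12 (n : ℕ) (T : Polynomial ℝ →ₗ[ℝ] Polynomial ℝ)
    (hT : ∀ f : Polynomial ℝ, f.degree ≤ ((n + 1 : ℕ) : WithBot ℕ) → Hyperbolic f →
      (Hyperbolic (T f) ∨ T f = 0))
    (f : Polynomial ℝ) (hf : StrictlyHyperbolic f)
    (hdeg : f.degree = ((n : ℕ) : WithBot ℕ) ∨ f.degree = ((n + 1 : ℕ) : WithBot ℕ))
    (hker : T f = 0) :
    ∀ g : Polynomial ℝ, g.degree ≤ ((n + 1 : ℕ) : WithBot ℕ) →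
      (Hyperbolic (T g) ∨ T g = 0) := by
  intro g hg
  obtain ⟨⟨hf0, hfz⟩, hsq⟩ := hf
  have hyp : Hyperbolic f := ⟨hf0, hfz⟩
  have hcard : f.roots.card = f.natDegree := card_roots_of_hyperbolic f hyp
  have hnd : f.roots.Nodup := by
    have hsep : f.Separable := (PerfectField.separable_iff_squarefree).mpr hsq
    exact nodup_roots hsep
  have hdn : f.degree = (f.natDegree : WithBot ℕ) := degree_eq_natDegree hf0
  have hnm : n ≤ f.natDegree := by
    rcases hdeg with h | h <;> rw [hdn] at h
    · have h2 : f.natDegree = n := by exact_mod_cast h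
      omega
    · have h2 : f.natDegree = n + 1 := by exact_mod_cast h
      omega
  have hfdeg : f.degree ≤ ((n + 1 : ℕ) : WithBot ℕ) := by
    rcases hdeg with h | h <;> rw [h] <;> exact_mod_cast (by omega : n ≤ n + 1).trans (le_refl _)
  obtain ⟨ε, hε0, hne0, hcard2⟩ := exists_perturb f g hf0 hcard hnd
  have hdegh : (f + ε • g).degree ≤ ((n + 1 : ℕ) : WithBot ℕ) :=
    (degree_add_le _ _).trans (max_le hfdeg ((degree_smul_le _ _).trans hg))
  have hnatdegh : (f + ε • g).natDegree ≤ n + 1 := natDegree_le_iff_degree_le.mpr hdegh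
  have hyph : Hyperbolic (f + ε • g) := hyperbolic_of_card _ hne0 (by omega)
  have hTh : T (f + ε • g) = ε • T g := by rw [map_add, map_smul, hker, zero_add]
  rcases hT (f + ε • g) hdegh hyph with hcase | hcase
  · left
    rw [hTh] at hcase
    obtain ⟨hne, hz⟩ := hcase
    refine ⟨fun h0 => hne (by rw [h0, smul_zero]), fun z hz0 => ?_⟩
    apply hz z
    rw [map_smul, hz0, smul_zero]
  · right
    rw [hTh] at hcase
    rcases smul_eq_zero.mp hcase with h0 | h0
    · exact absurd h0 (ne_of_gt hε0)
    · exact h0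
end
end

section
/- Let n ∈ ℕ and suppose the linear operator T : ℂ_n[z] → ℂ[z] maps every stable polynomial of degree at most n to a stable polynomial or to 0. If there exists a strictly stable polynomial f of degree n with T(f) = 0, then T(g) is stable or 0 for every g ∈ ℂ[z] with deg g ≤ n. -/
open Polynomial

noncomputable section

/-- A univariate complex polynomial is strictly stable if it does not vanish on the
closed upper half-plane. -/
def StrictlyUStable (f : Polynomial ℂ) : Prop := ∀ z : ℂ, 0 ≤ z.im → f.eval z ≠ 0

/-!
All zeros of `f` lie in the open lower half-plane, so on the closed upper half-plane
`‖f z‖ ≥ K (1 + ‖z‖)ⁿ`, while `‖g z‖ ≤ C (1 + ‖z‖)ⁿ` since `deg g ≤ n`. Hence `‖g‖ ≤ M ‖f‖`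
there, and for a small `c ≠ 0` the term `c g` cannot cancel `f`: `f + c g` is stable of degree
at most `n`. By linearity `T (f + c g) = c T g`, which is therefore stable or zero.
-/

lemma exists_pos_mul_one_add_norm_le_norm_sub {r : ℂ} (hr : r.im < 0) :
    ∃ c > 0, ∀ z : ℂ, 0 ≤ z.im → c * (1 + ‖z‖) ≤ ‖z - r‖ := by
  set d := -r.im
  have hd : 0 < d := neg_pos.mpr hr
  refine ⟨d / (1 + ‖r‖ + d), by positivity, fun z hz => ?_⟩
  have hdist : d ≤ ‖z - r‖ := by
    calc d ≤ (z - r).im := by simp [d, hz]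
      _ ≤ ‖z - r‖ := Complex.im_le_norm _
  have hrev : ‖z‖ - ‖r‖ ≤ ‖z - r‖ := norm_sub_norm_le z r
  rw [div_mul_eq_mul_div, div_le_iff₀ (by positivity)]
  -- `(1 + ‖r‖) ‖z - r‖ ≥ (1 + ‖r‖) d` and `d ‖z - r‖ ≥ d (‖z‖ - ‖r‖)` add up to the claim.
  nlinarith [mul_le_mul_of_nonneg_left hdist (by positivity : (0 : ℝ) ≤ 1 + ‖r‖),
    mul_le_mul_of_nonneg_left hrev hd.le]

lemma exists_pos_mul_pow_le_norm_prod_sub (s : Multiset ℂ) (hs : ∀ r ∈ s, r.im < 0) :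
    ∃ K > 0, ∀ z : ℂ, 0 ≤ z.im →
      K * (1 + ‖z‖) ^ Multiset.card s ≤ ‖(s.map (z - ·)).prod‖ := by
  induction s using Multiset.induction_on with
  | empty => exact ⟨1, one_pos, fun z _ => by simp⟩
  | cons r s ih =>
    obtain ⟨c, hc, hcz⟩ :=
      exists_pos_mul_one_add_norm_le_norm_sub (hs r (Multiset.mem_cons_self r s))
    obtain ⟨K, hK, hKz⟩ := ih fun r' hr' => hs r' (Multiset.mem_cons_of_mem hr')
    refine ⟨c * K, mul_pos hc hK, fun z hz => ?_⟩
    calc c * K * (1 + ‖z‖) ^ Multiset.card (r ::ₘ s)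
        = (c * (1 + ‖z‖)) * (K * (1 + ‖z‖) ^ Multiset.card s) := by
          rw [Multiset.card_cons, pow_succ]; ring
      _ ≤ ‖z - r‖ * ‖(s.map (z - ·)).prod‖ :=
          mul_le_mul (hcz z hz) (hKz z hz) (by positivity) (norm_nonneg _)
      _ = ‖((r ::ₘ s).map (z - ·)).prod‖ := by
          rw [Multiset.map_cons, Multiset.prod_cons, norm_mul]

lemma StrictlyUStable.ne_zero {f : ℂ[X]} (hf : StrictlyUStable f) : f ≠ 0 :=
  fun h => hf 0 le_rfl (by simp [h])

lemma StrictlyUStable.uStable {f : ℂ[X]} (hf : StrictlyUStable f) : UStable f :=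
  fun z hz => hf z hz.le

lemma StrictlyUStable.exists_pos_mul_pow_le_norm_eval {f : ℂ[X]} (hf : StrictlyUStable f) :
    ∃ K > 0, ∀ z : ℂ, 0 ≤ z.im → K * (1 + ‖z‖) ^ f.natDegree ≤ ‖f.eval z‖ := by
  have hsplit : f.Splits := IsAlgClosed.splits f
  have hroots : ∀ r ∈ f.roots, r.im < 0 := fun r hr =>
    not_le.mp fun him => hf r him ((mem_roots hf.ne_zero).mp hr)
  obtain ⟨K, hK, hKz⟩ := exists_pos_mul_pow_le_norm_prod_sub f.roots hroots
  have hlead : 0 < ‖f.leadingCoeff‖ := norm_pos_iff.mpr (leadingCoeff_ne_zero.mpr hf.ne_zero)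
  refine ⟨‖f.leadingCoeff‖ * K, mul_pos hlead hK, fun z hz => ?_⟩
  have heval : f.eval z = f.leadingCoeff * (f.roots.map (z - ·)).prod := by
    conv_lhs => rw [hsplit.eq_prod_roots]
    simp [eval_multiset_prod, Multiset.map_map]
  rw [heval, norm_mul, mul_assoc, ← splits_iff_card_roots.mp hsplit]
  exact mul_le_mul_of_nonneg_left (hKz z hz) hlead.le

lemma norm_eval_le_sum_norm_coeff_mul_pow {g : ℂ[X]} {n : ℕ} (hg : g.natDegree ≤ n) (z : ℂ) :
    ‖g.eval z‖ ≤ (∑ i ∈ Finset.range (n + 1), ‖g.coeff i‖) * (1 + ‖z‖) ^ n := by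
  rw [eval_eq_sum_range' (Nat.lt_succ_of_le hg), Finset.sum_mul]
  refine (norm_sum_le _ _).trans (Finset.sum_le_sum fun i hi => ?_)
  rw [norm_mul, norm_pow]
  have hone : 1 ≤ 1 + ‖z‖ := by linarith [norm_nonneg z]
  gcongr
  calc ‖z‖ ^ i ≤ (1 + ‖z‖) ^ i := pow_le_pow_left₀ (norm_nonneg z) (by linarith) i
    _ ≤ (1 + ‖z‖) ^ n := pow_le_pow_right₀ hone (Finset.mem_range_succ_iff.mp hi)

lemma StrictlyUStable.exists_norm_eval_le_mul {f g : ℂ[X]} (hf : StrictlyUStable f)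
    (hg : g.natDegree ≤ f.natDegree) :
    ∃ M ≥ 0, ∀ z : ℂ, 0 ≤ z.im → ‖g.eval z‖ ≤ M * ‖f.eval z‖ := by
  obtain ⟨K, hK, hKz⟩ := hf.exists_pos_mul_pow_le_norm_eval
  set C := ∑ i ∈ Finset.range (f.natDegree + 1), ‖g.coeff i‖
  have hC : 0 ≤ C := Finset.sum_nonneg fun i _ => norm_nonneg _
  refine ⟨C / K, by positivity, fun z hz => ?_⟩
  calc ‖g.eval z‖ ≤ C * (1 + ‖z‖) ^ f.natDegree := norm_eval_le_sum_norm_coeff_mul_pow hg z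
    _ = C / K * (K * (1 + ‖z‖) ^ f.natDegree) := by field_simp
    _ ≤ C / K * ‖f.eval z‖ := mul_le_mul_of_nonneg_left (hKz z hz) (by positivity)

lemma UStable.add_smul {f g : ℂ[X]} {M : ℝ} {c : ℂ} (hf : UStable f)
    (hgf : ∀ z : ℂ, 0 < z.im → ‖g.eval z‖ ≤ M * ‖f.eval z‖) (hc : ‖c‖ * M < 1) :
    UStable (f + c • g) := by
  intro z hz hzero
  have hfz : 0 < ‖f.eval z‖ := norm_pos_iff.mpr (hf z hz)
  have hcg : ‖f.eval z‖ = ‖c * g.eval z‖ := by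
    rw [eval_add, eval_smul, smul_eq_mul, add_eq_zero_iff_eq_neg] at hzero
    rw [hzero, norm_neg]
  have hlt : ‖c * g.eval z‖ < ‖f.eval z‖ :=
    calc ‖c * g.eval z‖ ≤ ‖c‖ * (M * ‖f.eval z‖) := by
          rw [norm_mul]; exact mul_le_mul_of_nonneg_left (hgf z hz) (norm_nonneg c)
      _ < ‖f.eval z‖ := by nlinarith
  exact hlt.ne hcg.symm

lemma StrictlyUStable.exists_ne_zero_uStable_add_smul {f g : ℂ[X]} (hf : StrictlyUStable f)
    (hg : g.natDegree ≤ f.natDegree) : ∃ c : ℂ, c ≠ 0 ∧ UStable (f + c • g) := by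
  obtain ⟨M, hM, hgf⟩ := hf.exists_norm_eval_le_mul hg
  refine ⟨((M + 1)⁻¹ : ℝ), by norm_cast; positivity,
    hf.uStable.add_smul (fun z hz => hgf z hz.le) ?_⟩
  rw [Complex.norm_real, Real.norm_of_nonneg (by positivity), inv_mul_lt_one₀ (by positivity)]
  linarith

/-- **Lemma (degenerate stability preservers).** Suppose `T : ℂ_n[z] → ℂ[z]` maps
every stable polynomial of degree at most `n` to a stable polynomial or to `0`, and
`T` annihilates some strictly stable polynomial of degree `n`. Then `T(g)` is stable
or `0` for every `g` of degree at most `n`. -/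
theorem stmt_13 (n : ℕ) (T : Polynomial ℂ →ₗ[ℂ] Polynomial ℂ)
    (hT : ∀ f : Polynomial ℂ, f.degree ≤ (n : WithBot ℕ) → UStable f →
      (UStable (T f) ∨ T f = 0))
    (f : Polynomial ℂ) (hf : StrictlyUStable f) (hdeg : f.degree = (n : WithBot ℕ))
    (hker : T f = 0) :
    ∀ g : Polynomial ℂ, g.degree ≤ (n : WithBot ℕ) → (UStable (T g) ∨ T g = 0) := by
  intro g hg
  have hfn : f.natDegree = n := natDegree_eq_of_degree_eq_some hdeg
  obtain ⟨c, hc, hstable⟩ :=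
    hf.exists_ne_zero_uStable_add_smul (hfn ▸ natDegree_le_iff_degree_le.mpr hg)
  have hdeg' : (f + c • g).degree ≤ n :=
    (degree_add_le _ _).trans (max_le hdeg.le ((degree_smul_le _ _).trans hg))
  have hTcg : T (f + c • g) = c • T g := by rw [map_add, map_smul, hker, zero_add]
  rcases hT _ hdeg' hstable with hstab | hzero
  · left
    intro z hz hTz
    exact hstab z hz (by rw [hTcg, eval_smul, hTz, smul_zero])
  · exact .inr ((smul_eq_zero.mp (hTcg ▸ hzero)).resolve_left hc)
end
end

section
/- If V ⊆ ℝ[z] is an ℝ-linear subspace every nonzero element of which is a hyperbolic polynomial, then dim_ℝ V ≤ 2. -/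
open Polynomial

noncomputable section

/-- **Lemma.** A real linear subspace of `ℝ[z]` all of whose nonzero elements are
hyperbolic has dimension at most `2`. -/
theorem stmt_14 (V : Submodule ℝ (Polynomial ℝ))
    (hV : ∀ p ∈ V, p ≠ 0 → Hyperbolic p) :
    Module.rank ℝ ↥V ≤ 2 := by
  let f : ↥V →ₗ[ℝ] ℂ :=
    (Polynomial.aeval (Complex.I) : Polynomial ℝ →ₐ[ℝ] ℂ).toLinearMap.comp V.subtype
  have hf : Function.Injective f := by
    rw [← LinearMap.ker_eq_bot, LinearMap.ker_eq_bot']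
    intro m hm
    by_contra hne
    have hm0 : (m : Polynomial ℝ) ≠ 0 := fun h => hne (Subtype.ext h)
    have := (hV m m.2 hm0).2 Complex.I hm
    simp [Complex.I_im] at this
  calc Module.rank ℝ ↥V ≤ Module.rank ℝ ℂ := LinearMap.rank_le_of_injective f hf
    _ = 2 := Complex.rank_real_complex
end
end

section
/- If V ⊆ ℂ[z] is a ℂ-linear subspace every nonzero element of which is a stable polynomial, then dim_ℂ V ≤ 1. -/
open Polynomial

noncomputable section

/-- **Lemma.** A complex linear subspace of `ℂ[z]` all of whose nonzero elements are
stable has dimension at most `1`. -/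
theorem stmt_15 (V : Submodule ℂ (Polynomial ℂ))
    (hV : ∀ p ∈ V, p ≠ 0 → UStable p) :
    Module.rank ℂ ↥V ≤ 1 := by
  by_cases hbot : V = ⊥
  · subst hbot
    exact le_trans (by simp) zero_le_one
  · obtain ⟨f, hfV, hf0⟩ := Submodule.exists_mem_ne_zero_of_ne_bot hbot
    rw [rank_submodule_le_one_iff']
    refine ⟨f, fun g hgV => ?_⟩
    rw [Submodule.mem_span_singleton]
    have hfi : f.eval Complex.I ≠ 0 := hV f hfV hf0 Complex.I (by simp)
    refine ⟨g.eval Complex.I / f.eval Complex.I, ?_⟩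
    by_contra hne
    have hh : g - (g.eval Complex.I / f.eval Complex.I) • f ≠ 0 := by
      intro h; apply hne; linear_combination -h
    have hhV : g - (g.eval Complex.I / f.eval Complex.I) • f ∈ V :=
      Submodule.sub_mem V hgV (Submodule.smul_mem V _ hfV)
    have := hV _ hhV hh Complex.I (by simp)
    apply this
    simp [div_mul_cancel₀ _ hfi]
end
end
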